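/- Let r ≥ 1 and φ : ℤ/rℤ → Σ_p(D), and let M_{D,p}(φ) be the set of minimal elements U of E_{D,p}(r) whose support is φ (i.e. φ_U = φ). Then M_{D,p}(φ) is empty if and only if at least one of the sets V(φ(−i−1), φ(−i)), 0 ≤ i ≤ r−1, is empty. -/

import Mathlib

open scoped BigOperators
open scoped Classical

/-- `sp p u` is the sum of the base-`p` digits of `u`. -/
def sp (p u : ℕ) : ℕ := (Nat.digits p u).sum

variable {ι : Type} [Fintype ι]

/-- The coordinatewise sum `Σ_{d ∈ D} u_d · d`. -/
def sigmaSum (D : Finset (ι → ℕ)) (U : D → ℕ) (k : ι) : ℕ :=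
  ∑ d, U d * (d : ι → ℕ) k

/-- Membership in the set `E_{D,p}(r)`. -/
def memE (p : ℕ) (D : Finset (ι → ℕ)) (r : ℕ) (U : D → ℕ) : Prop :=
  (∀ d, U d ≤ p ^ r - 1) ∧
  (∀ k, (p ^ r - 1) ∣ sigmaSum D U k ∧ 0 < sigmaSum D U k)

/-- The `p`-weight `s_p(U)` of a tuple `U`. -/
def spU (p : ℕ) (D : Finset (ι → ℕ)) (U : D → ℕ) : ℕ := ∑ d, sp p (U d)

/-- `s_{D,p}(r)`, the minimal `p`-weight of an element of `E_{D,p}(r)`. -/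
noncomputable def sDp (p : ℕ) (D : Finset (ι → ℕ)) (r : ℕ) : ℕ :=
  sInf { s | ∃ U : D → ℕ, memE p D r U ∧ spU p D U = s }

/-- The `p`-density `δ_p(D)` of the set `D`. -/
noncomputable def density (p : ℕ) (D : Finset (ι → ℕ)) : ℝ :=
  (1 / ((p : ℝ) - 1)) * sInf { x : ℝ | ∃ r : ℕ, 1 ≤ r ∧ x = (sDp p D r : ℝ) / (r : ℝ) }

/-- A minimal solution in `E_{D,p}(r)`. -/
def minimalSol (p : ℕ) (D : Finset (ι → ℕ)) (r : ℕ) (U : D → ℕ) : Prop :=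
  memE p D r U ∧ (spU p D U : ℝ) = ((p : ℝ) - 1) * (r : ℝ) * density p D

/-- `φ_r(U) = (1/(p^r − 1)) Σ_{d ∈ D} u_d · d`. -/
def phiMap (p : ℕ) (D : Finset (ι → ℕ)) (r : ℕ) (U : D → ℕ) (k : ι) : ℕ :=
  sigmaSum D U k / (p ^ r - 1)

/-- The shift `δ_r` on `{0, …, p^r − 1}`. -/
def shiftFun (p r u : ℕ) : ℕ := if u = p ^ r - 1 then u else (p * u) % (p ^ r - 1)

/-- The componentwise action of the shift `δ_r` on tuples. -/
def shiftE (p : ℕ) (D : Finset (ι → ℕ)) (r : ℕ) (U : D → ℕ) : D → ℕ :=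
  fun d => shiftFun p r (U d)

/-- The support `φ_U : ℤ/rℤ → ℕ^n` of a solution `U ∈ E_{D,p}(r)`. -/
def suppMap (p : ℕ) (D : Finset (ι → ℕ)) (r : ℕ) (U : D → ℕ) (k : ZMod r) : ι → ℕ :=
  phiMap p D r ((shiftE p D r)^[k.val] U)

/-- Membership in `MI_{D,p}(r)`: minimal irreducible solutions. -/
def memMI (p : ℕ) (D : Finset (ι → ℕ)) (r : ℕ) (U : D → ℕ) : Prop :=
  minimalSol p D r U ∧ Function.Injective (suppMap p D r U)

/-- The `p`-minimal support `Σ_p(D)`. -/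
def minSupport (p : ℕ) (D : Finset (ι → ℕ)) : Set (ι → ℕ) :=
  { e | ∃ r : ℕ, 1 ≤ r ∧ ∃ U : D → ℕ, memMI p D r U ∧ e ∈ Set.range (suppMap p D r U) }

/-- `ψ(U)`: the tuple of last base-`p` digits of `U`. -/
def psiMap (p : ℕ) (D : Finset (ι → ℕ)) (U : D → ℕ) : D → ℕ := fun d => U d % p

/-- The set `V(e, e')` of digit tuples of minimal irreducible solutions with
`φ_U(−1) = e` and `φ_U(0) = e'`. -/
def Vset (p : ℕ) (D : Finset (ι → ℕ)) (e e' : ι → ℕ) : Set (D → ℕ) :=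
  { v | ∃ r : ℕ, 1 ≤ r ∧ ∃ U : D → ℕ, memMI p D r U ∧
      suppMap p D r U (-1) = e ∧ suppMap p D r U 0 = e' ∧ psiMap p D U = v }

/-- The weight `w(V) = Σ_{d ∈ D} v_d`. -/
def weightV (D : Finset (ι → ℕ)) (v : D → ℕ) : ℕ := ∑ d, v d

/-!
Reading the base-`p` digits of `U ∈ E_{D,p}(r)` from the lowest one up, the support of `U` runs
backwards through a cycle of steps `p e' = Σ_d v_d d + e`, whose digit tuples `v` carry the weight
of `U`; conversely every closed path of such steps through a positive point is a solution, with the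
path as its support. Hence a closed path of length `L` has weight at least `(p - 1) L δ_p(D)`.

If `U` is minimal but its support is not injective, cutting the cycle at a repeated point gives two
shorter cycles whose weights add up, so both are minimal. By induction every edge
`φ(-i-1) → φ(-i)` of the support lies on a minimal irreducible cycle, which puts the digit tuple of
that edge into `V(φ(-i-1), φ(-i))`.

Conversely, choose `W_i ∈ MI_{D,p}` realising each `V(φ(-i-1), φ(-i))`. Their first digits form a
cycle with support `φ`, and their remaining digits chain into a closed path of length
`Σ_i (r_i - 1)`. The lower bound for that closed path leaves at most `(p - 1) r δ_p(D)` for the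
cycle, which is therefore minimal.
-/

omit [Fintype ι]

section Digits

variable {p : ℕ}

theorem sp_eq_mod_add_sp_div (hp : 2 ≤ p) (u : ℕ) : sp p u = u % p + sp p (u / p) := by
  rcases Nat.eq_zero_or_pos u with rfl | hu
  · simp [sp]
  · rw [sp, Nat.digits_def' hp hu, List.sum_cons, sp]

theorem sp_add_mul (hp : 2 ≤ p) {c : ℕ} (hc : c < p) (t : ℕ) : sp p (c + p * t) = c + sp p t := by
  rw [sp_eq_mod_add_sp_div hp, Nat.add_mul_mod_self_left, Nat.mod_eq_of_lt hc,
    Nat.add_mul_div_left _ _ (by omega), Nat.div_eq_of_lt hc, zero_add]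

theorem sum_range_succ_mul_pow (b : ℕ → ℕ) (L : ℕ) :
    ∑ j ∈ Finset.range (L + 1), b j * p ^ j
      = b 0 + p * ∑ j ∈ Finset.range L, b (j + 1) * p ^ j := by
  rw [Finset.sum_range_succ', Finset.mul_sum, add_comm]
  simp only [pow_succ, pow_zero, mul_one]
  congr 1
  exact Finset.sum_congr rfl fun j _ => by ring

theorem sum_mul_pow_lt {L : ℕ} {b : ℕ → ℕ} (hb : ∀ j < L, b j < p) :
    ∑ j ∈ Finset.range L, b j * p ^ j < p ^ L := by
  induction L generalizing b with
  | zero => simp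
  | succ L ih =>
    have htail := ih (b := fun j => b (j + 1)) fun j hj => hb (j + 1) (by omega)
    have hb0 := hb 0 (by omega)
    rw [sum_range_succ_mul_pow, pow_succ']
    nlinarith

theorem sum_mul_pow_div_pow_mod (hp : 2 ≤ p) {L : ℕ} {b : ℕ → ℕ} (hb : ∀ j < L, b j < p)
    {i : ℕ} (hi : i < L) : (∑ j ∈ Finset.range L, b j * p ^ j) / p ^ i % p = b i := by
  induction L generalizing b i with
  | zero => omega
  | succ L ih =>
    rw [sum_range_succ_mul_pow]
    cases i with
    | zero =>
      rw [pow_zero, Nat.div_one, Nat.add_mul_mod_self_left, Nat.mod_eq_of_lt (hb 0 (by omega))]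
    | succ i =>
      rw [pow_succ', ← Nat.div_div_eq_div_mul, Nat.add_mul_div_left _ _ (by omega),
        Nat.div_eq_of_lt (hb 0 (by omega)), zero_add]
      exact ih (fun j hj => hb (j + 1) (by omega)) (by omega)

theorem sp_sum_mul_pow (hp : 2 ≤ p) {L : ℕ} {b : ℕ → ℕ} (hb : ∀ j < L, b j < p) :
    sp p (∑ j ∈ Finset.range L, b j * p ^ j) = ∑ j ∈ Finset.range L, b j := by
  induction L generalizing b with
  | zero => simp [sp]
  | succ L ih =>
    rw [sum_range_succ_mul_pow, sp_add_mul hp (hb 0 (by omega)),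
      ih fun j hj => hb (j + 1) (by omega), Finset.sum_range_succ' _ L, add_comm]

theorem sum_div_pow_mod_mul_pow (hp : 2 ≤ p) {L u : ℕ} (hu : u < p ^ L) :
    ∑ j ∈ Finset.range L, u / p ^ j % p * p ^ j = u := by
  induction L generalizing u with
  | zero => simp_all
  | succ L ih =>
    have hu' : u / p < p ^ L := by
      rw [Nat.div_lt_iff_lt_mul (by omega), ← pow_succ]; exact hu
    rw [sum_range_succ_mul_pow]
    simp only [pow_succ', ← Nat.div_div_eq_div_mul, pow_zero, Nat.div_one]
    rw [ih hu', Nat.mod_add_div]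

end Digits

/-- Base-`p` digits of a number below `p ^ r` are indexed by `ZMod r`, on which the shift `δ_r`
acts by `i ↦ i + 1`. -/
def digit (p : ℕ) {r : ℕ} (u : ℕ) (i : ZMod r) : ℕ := u / p ^ i.val % p

section Shift

variable {p r : ℕ}

theorem ZMod.val_neg_one_of_pos (hr : 1 ≤ r) : (-1 : ZMod r).val = r - 1 := by
  obtain ⟨n, rfl⟩ : ∃ n, r = n + 1 := ⟨r - 1, by omega⟩
  exact ZMod.val_neg_one n

theorem pow_pred_mul (hr : 1 ≤ r) : p ^ (r - 1) * p = p ^ r := by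
  rw [← pow_succ, Nat.sub_add_cancel hr]

theorem mul_eq_rotate_add (hp : 0 < p) (hr : 1 ≤ r) (u : ℕ) :
    p * u = (u / p ^ (r - 1) + u % p ^ (r - 1) * p) + (p ^ r - 1) * (u / p ^ (r - 1)) := by
  have hdiv := Nat.mod_add_div u (p ^ (r - 1))
  have hP : 1 ≤ p ^ (r - 1) * p := by rw [pow_pred_mul hr]; exact Nat.one_le_pow r p hp
  rw [← pow_pred_mul hr]
  generalize p ^ (r - 1) = P at *
  generalize u / P = c at *
  generalize u % P = s at *
  subst hdiv
  zify [hP]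
  ring

theorem div_pow_pred_lt (hp : 0 < p) (hr : 1 ≤ r) {u : ℕ} (hu : u ≤ p ^ r - 1) :
    u / p ^ (r - 1) < p := by
  rw [Nat.div_lt_iff_lt_mul (by positivity), mul_comm, pow_pred_mul hr]
  have := Nat.one_le_pow r p hp
  omega

theorem add_one_eq_of_add_mul_add_one_eq {a b m n : ℕ} (ha : a < m) (hb : b < n)
    (h : a + b * m + 1 = n * m) : a + 1 = m ∧ b + 1 = n := by
  have hm : a + 1 = m := le_antisymm ha (by nlinarith)
  exact ⟨hm, Nat.eq_of_mul_eq_mul_right (by omega : 0 < m) (by linarith)⟩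

theorem shiftFun_eq (hp : 0 < p) (hr : 1 ≤ r) {u : ℕ} (hu : u ≤ p ^ r - 1) :
    shiftFun p r u = u / p ^ (r - 1) + u % p ^ (r - 1) * p := by
  have hc := div_pow_pred_lt hp hr hu
  have hs : u % p ^ (r - 1) < p ^ (r - 1) := Nat.mod_lt _ (by positivity)
  have hdiv := Nat.mod_add_div u (p ^ (r - 1))
  unfold shiftFun
  rw [mul_eq_rotate_add hp hr, Nat.add_mul_mod_self_left, ← pow_pred_mul hr] at *
  generalize p ^ (r - 1) = P at *
  generalize u / P = c at *
  generalize u % P = s at *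
  subst hdiv
  have hrot : c + s * p + 1 ≤ P * p := by nlinarith
  -- both `u = p ^ r - 1` and its rotation being `p ^ r - 1` force all digits to be `p - 1`
  split_ifs with hmax
  · obtain ⟨rfl, rfl⟩ :=
      add_one_eq_of_add_mul_add_one_eq hs hc (by rw [mul_comm c P, mul_comm p P]; omega)
    ring
  · refine Nat.mod_eq_of_lt (lt_of_le_of_ne (by omega) fun heq => hmax ?_)
    obtain ⟨rfl, rfl⟩ := add_one_eq_of_add_mul_add_one_eq hc hs (by omega)
    have : (s + 1) * (c + 1) = s + (s + 1) * c + 1 := by ring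
    omega

theorem shiftFun_le {u : ℕ} (hu : u ≤ p ^ r - 1) : shiftFun p r u ≤ p ^ r - 1 := by
  unfold shiftFun
  split_ifs with hmax
  · exact hu
  · exact (Nat.mod_lt _ (by omega)).le

theorem shiftFun_eq_zero (hp : 0 < p) (hr : 1 ≤ r) {u : ℕ} (hu : u ≤ p ^ r - 1)
    (h : shiftFun p r u = 0) : u = 0 := by
  rw [shiftFun_eq hp hr hu, Nat.add_eq_zero_iff, Nat.mul_eq_zero] at h
  rw [← Nat.mod_add_div u (p ^ (r - 1)), h.1]
  omega

theorem mod_pow_div_pow_mod {m n : ℕ} (hmn : m < n) (u : ℕ) :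
    u % p ^ n / p ^ m % p = u / p ^ m % p := by
  rw [← Nat.add_sub_cancel' hmn.le, pow_add, Nat.mod_mul_right_div_self,
    Nat.mod_mod_of_dvd _ (dvd_pow_self p (by omega))]

theorem digit_shiftFun [NeZero r] (hp : 0 < p) {u : ℕ} (hu : u ≤ p ^ r - 1) (i : ZMod r) :
    digit p (shiftFun p r u) (i + 1) = digit p u i := by
  have hr : 1 ≤ r := NeZero.one_le
  have hi : i + 1 = ((i.val + 1 : ℕ) : ZMod r) := by push_cast; rw [ZMod.natCast_zmod_val]
  have hm := ZMod.val_lt i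
  rw [digit, digit, hi, ZMod.val_natCast, shiftFun_eq hp hr hu]
  rcases (Nat.lt_or_ge (i.val + 1) r) with hlt | hge
  · rw [Nat.mod_eq_of_lt hlt, pow_succ', ← Nat.div_div_eq_div_mul,
      Nat.add_mul_div_right _ _ hp, Nat.div_eq_of_lt (div_pow_pred_lt hp hr hu), zero_add,
      mod_pow_div_pow_mod (by omega)]
  · rw [show i.val + 1 = r by omega, Nat.mod_self, pow_zero, Nat.div_one,
      Nat.add_mul_mod_self_right, show i.val = r - 1 by omega]

theorem iterate_shiftFun_le {u : ℕ} (hu : u ≤ p ^ r - 1) (a : ℕ) :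
    (shiftFun p r)^[a] u ≤ p ^ r - 1 := by
  induction a with
  | zero => exact hu
  | succ a ih => rw [Function.iterate_succ_apply']; exact shiftFun_le ih

theorem digit_iterate_shiftFun [NeZero r] (hp : 0 < p) {u : ℕ} (hu : u ≤ p ^ r - 1) (a : ℕ)
    (i : ZMod r) : digit p ((shiftFun p r)^[a] u) (i + (a : ZMod r)) = digit p u i := by
  induction a generalizing i with
  | zero => simp
  | succ a ih =>
    rw [Function.iterate_succ_apply', Nat.cast_succ, ← add_assoc,
      digit_shiftFun hp (iterate_shiftFun_le hu a), ih]

theorem eq_of_digit_eq (hp : 2 ≤ p) [NeZero r] {u u' : ℕ} (hu : u < p ^ r) (hu' : u' < p ^ r)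
    (h : ∀ i : ZMod r, digit p u i = digit p u' i) : u = u' := by
  have hdig : ∀ w, ∀ j ∈ Finset.range r, w / p ^ j % p * p ^ j = digit p w (j : ZMod r) * p ^ j :=
    fun w j hj => by rw [digit, ZMod.val_natCast, Nat.mod_eq_of_lt (Finset.mem_range.mp hj)]
  rw [← sum_div_pow_mod_mul_pow hp hu, ← sum_div_pow_mod_mul_pow hp hu',
    Finset.sum_congr rfl (hdig u), Finset.sum_congr rfl (hdig u')]
  simp only [h]

theorem iterate_shiftFun_self (hp : 2 ≤ p) (hr : 1 ≤ r) {u : ℕ} (hu : u ≤ p ^ r - 1) :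
    (shiftFun p r)^[r] u = u := by
  have : NeZero r := ⟨by omega⟩
  have hpos : 0 < p ^ r := by positivity
  have hle := iterate_shiftFun_le hu r
  refine eq_of_digit_eq (r := r) hp (by omega) (by omega) fun i => ?_
  simpa using digit_iterate_shiftFun (by omega) hu r i

theorem div_pow_pred_eq_digit [NeZero r] (hp : 0 < p) {u : ℕ} (hu : u ≤ p ^ r - 1) :
    u / p ^ (r - 1) = digit p u (-1 : ZMod r) := by
  rw [digit, ZMod.val_neg_one_of_pos NeZero.one_le,
    Nat.mod_eq_of_lt (div_pow_pred_lt hp NeZero.one_le hu)]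

end Shift

/-- For `U ∈ E_{D,p}(r)`, the step from `φ_r(δ_r U)` to `φ_r(U)` reads the top digits of `U`. -/
def DigitStep (p : ℕ) (D : Finset (ι → ℕ)) (e : ι → ℕ) (v : D → ℕ) (e' : ι → ℕ) : Prop :=
  (∀ d, v d < p) ∧ ∀ k, sigmaSum D v k + e k = p * e' k

def IsPath (p : ℕ) (D : Finset (ι → ℕ)) (L : ℕ) (e : ℕ → ι → ℕ) (v : ℕ → D → ℕ) : Prop :=
  ∀ j < L, DigitStep p D (e j) (v j) (e (j + 1))

def IsWalk (p : ℕ) (D : Finset (ι → ℕ)) (e : ℕ → ι → ℕ) (v : ℕ → D → ℕ) : Prop :=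
  ∀ j, DigitStep p D (e j) (v j) (e (j + 1))

def tupleOfDigits {D : Finset (ι → ℕ)} (p L : ℕ) (v : ℕ → D → ℕ) : D → ℕ :=
  fun d => ∑ j ∈ Finset.range L, v j d * p ^ j

def pathWeight (D : Finset (ι → ℕ)) (L : ℕ) (v : ℕ → D → ℕ) : ℕ :=
  ∑ j ∈ Finset.range L, weightV D (v j)

section Paths

variable {p L : ℕ} {D : Finset (ι → ℕ)} {e : ℕ → ι → ℕ} {v : ℕ → D → ℕ}

theorem IsWalk.isPath (h : IsWalk p D e v) : IsPath p D L e v := fun j _ => h j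

theorem IsPath.sum_pow_mul_add (h : IsPath p D L e v) (k : ι) :
    ∑ j ∈ Finset.range L, p ^ j * sigmaSum D (v j) k + e 0 k = p ^ L * e L k := by
  induction L with
  | zero => simp
  | succ L ih =>
    rw [Finset.sum_range_succ, add_right_comm, ih fun j hj => h j (by omega), ← mul_add,
      add_comm, (h L (by omega)).2 k, pow_succ, mul_assoc]

theorem sigmaSum_tupleOfDigits (k : ι) :
    sigmaSum D (tupleOfDigits p L v) k = ∑ j ∈ Finset.range L, p ^ j * sigmaSum D (v j) k := by
  simp only [sigmaSum, tupleOfDigits, Finset.sum_mul, Finset.mul_sum]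
  rw [Finset.sum_comm]
  exact Finset.sum_congr rfl fun j _ => Finset.sum_congr rfl fun d _ => by ring

theorem IsPath.sigmaSum_tupleOfDigits (hp : 0 < p) (h : IsPath p D L e v) (hcl : e L = e 0)
    (k : ι) : sigmaSum D (tupleOfDigits p L v) k = (p ^ L - 1) * e 0 k := by
  have htel := h.sum_pow_mul_add k
  rw [hcl] at htel
  rw [_root_.sigmaSum_tupleOfDigits, Nat.sub_one_mul]
  have := Nat.one_le_pow L p hp
  have : e 0 k ≤ p ^ L * e 0 k := Nat.le_mul_of_pos_left _ (by positivity)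
  omega

theorem IsPath.memE_tupleOfDigits (hp : 2 ≤ p) (hL : 1 ≤ L) (h : IsPath p D L e v)
    (hcl : e L = e 0) (hpos : ∀ k, 0 < e 0 k) : memE p D L (tupleOfDigits p L v) := by
  have hpL : 2 ≤ p ^ L := le_trans hp (Nat.le_self_pow (by omega) p)
  refine ⟨fun d => ?_, fun k => ?_⟩
  · have := sum_mul_pow_lt fun j hj => (h j hj).1 d
    exact Nat.le_sub_one_of_lt this
  · rw [h.sigmaSum_tupleOfDigits (by omega) hcl]
    exact ⟨dvd_mul_right _ _, Nat.mul_pos (by omega) (hpos k)⟩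

theorem IsPath.phiMap_tupleOfDigits (hp : 2 ≤ p) (hL : 1 ≤ L) (h : IsPath p D L e v)
    (hcl : e L = e 0) : phiMap p D L (tupleOfDigits p L v) = e 0 := by
  have hpL : 2 ≤ p ^ L := le_trans hp (Nat.le_self_pow (by omega) p)
  funext k
  rw [phiMap, h.sigmaSum_tupleOfDigits (by omega) hcl, Nat.mul_div_cancel_left _ (by omega)]

theorem spU_tupleOfDigits (hp : 2 ≤ p) (hv : ∀ j < L, ∀ d, v j d < p) :
    spU p D (tupleOfDigits p L v) = pathWeight D L v := by
  simp only [spU, tupleOfDigits, pathWeight, weightV]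
  rw [Finset.sum_comm]
  exact Finset.sum_congr rfl fun d _ => sp_sum_mul_pow hp fun j hj => hv j hj d

theorem digit_tupleOfDigits [NeZero L] (hp : 2 ≤ p) (hv : ∀ j < L, ∀ d, v j d < p) (d : D)
    (i : ZMod L) : digit p (tupleOfDigits p L v d) i = v i.val d :=
  sum_mul_pow_div_pow_mod hp (fun j hj => hv j hj d) (ZMod.val_lt i)

end Paths

def digitsOf {D : Finset (ι → ℕ)} (p r : ℕ) (U : D → ℕ) : ℕ → D → ℕ :=
  fun j d => digit p (U d) (j : ZMod r)

section Support

variable {p r : ℕ} {D : Finset (ι → ℕ)} {U : D → ℕ}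

theorem iterate_shiftE_apply (a : ℕ) (d : D) :
    (shiftE p D r)^[a] U d = (shiftFun p r)^[a] (U d) := by
  induction a generalizing U with
  | zero => rfl
  | succ a ih => rw [Function.iterate_succ_apply, Function.iterate_succ_apply, ih]; rfl

theorem mul_sigmaSum_eq (hp : 0 < p) (hr : 1 ≤ r) (hU : ∀ d, U d ≤ p ^ r - 1) (k : ι) :
    p * sigmaSum D U k = sigmaSum D (shiftE p D r U) k
      + (p ^ r - 1) * sigmaSum D (fun d => U d / p ^ (r - 1)) k := by
  simp only [sigmaSum, Finset.mul_sum, ← Finset.sum_add_distrib]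
  refine Finset.sum_congr rfl fun d _ => ?_
  rw [← mul_assoc, mul_eq_rotate_add hp hr, ← shiftFun_eq hp hr (hU d), shiftE]
  ring

theorem memE_shiftE (hp : 2 ≤ p) (hr : 1 ≤ r) (hU : memE p D r U) :
    memE p D r (shiftE p D r U) := by
  refine ⟨fun d => shiftFun_le (hU.1 d), fun k => ⟨?_, ?_⟩⟩
  · have h := mul_sigmaSum_eq (by omega) hr hU.1 k
    exact (Nat.dvd_add_left (dvd_mul_right _ _)).mp (h ▸ dvd_mul_of_dvd_right (hU.2 k).1 p)
  · by_contra hzero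
    have hsum := (hU.2 k).2
    simp only [sigmaSum, not_lt, Nat.le_zero, Finset.sum_eq_zero_iff, Finset.mem_univ,
      true_implies, Nat.mul_eq_zero, shiftE] at hzero
    refine hsum.ne' (Finset.sum_eq_zero fun d _ => ?_)
    rcases hzero d with h | h
    · rw [shiftFun_eq_zero (by omega) hr (hU.1 d) h, zero_mul]
    · rw [h, mul_zero]

theorem memE_iterate_shiftE (hp : 2 ≤ p) (hr : 1 ≤ r) (hU : memE p D r U) (a : ℕ) :
    memE p D r ((shiftE p D r)^[a] U) := by
  induction a with
  | zero => exact hU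
  | succ a ih => rw [Function.iterate_succ_apply']; exact memE_shiftE hp hr ih

theorem isPeriodicPt_shiftE (hp : 2 ≤ p) (hr : 1 ≤ r) (hU : ∀ d, U d ≤ p ^ r - 1) :
    Function.IsPeriodicPt (shiftE p D r) r U :=
  funext fun d => by rw [iterate_shiftE_apply, iterate_shiftFun_self hp hr (hU d)]

theorem sigmaSum_eq_mul_phiMap (hU : memE p D r U) (k : ι) :
    sigmaSum D U k = (p ^ r - 1) * phiMap p D r U k :=
  (Nat.mul_div_cancel' (hU.2 k).1).symm

theorem phiMap_pos (hU : memE p D r U) (k : ι) : 0 < phiMap p D r U k := by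
  have h := (hU.2 k).2
  rw [sigmaSum_eq_mul_phiMap hU] at h
  exact Nat.pos_of_mul_pos_left h

theorem digitStep_phiMap_shiftE (hp : 2 ≤ p) (hr : 1 ≤ r) (hU : memE p D r U) :
    DigitStep p D (phiMap p D r (shiftE p D r U)) (fun d => U d / p ^ (r - 1))
      (phiMap p D r U) := by
  have hpr : 0 < p ^ r - 1 := by
    have := Nat.pow_le_pow_right (show 0 < p by omega) hr
    rw [pow_one] at this; omega
  refine ⟨fun d => div_pow_pred_lt (by omega) hr (hU.1 d), fun k => ?_⟩
  have h := mul_sigmaSum_eq (by omega) hr hU.1 k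
  rw [sigmaSum_eq_mul_phiMap hU, sigmaSum_eq_mul_phiMap (memE_shiftE hp hr hU)] at h
  refine Nat.eq_of_mul_eq_mul_left hpr ?_
  linear_combination h.symm

theorem suppMap_zero : suppMap p D r U 0 = phiMap p D r U := by
  simp [suppMap]

theorem suppMap_add_one [NeZero r] (hp : 2 ≤ p) (hU : ∀ d, U d ≤ p ^ r - 1) (κ : ZMod r) :
    suppMap p D r U (κ + 1) = phiMap p D r (shiftE p D r ((shiftE p D r)^[κ.val] U)) := by
  rw [suppMap, ← Function.iterate_succ_apply' (shiftE p D r),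
    ← (isPeriodicPt_shiftE hp NeZero.one_le hU).iterate_mod_apply (κ.val + 1), ZMod.val_add,
    ZMod.val_one_eq_one_mod, Nat.add_mod_mod]

theorem isWalk_suppMap [NeZero r] (hp : 2 ≤ p) (hU : memE p D r U) :
    IsWalk p D (fun j => suppMap p D r U (-(j : ZMod r))) (digitsOf p r U) := by
  intro j
  set κ : ZMod r := -((j + 1 : ℕ) : ZMod r) with hκ
  have hj : -(j : ZMod r) = κ + 1 := by rw [hκ]; push_cast; ring
  have hW := memE_iterate_shiftE hp NeZero.one_le hU κ.val
  have hdigits : (fun d => (shiftE p D r)^[κ.val] U d / p ^ (r - 1)) = digitsOf p r U j := by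
    funext d
    rw [div_pow_pred_eq_digit (by omega) (hW.1 d), iterate_shiftE_apply,
      show (-1 : ZMod r) = (j : ZMod r) + (κ.val : ℕ) by
        rw [ZMod.natCast_zmod_val, hκ]; push_cast; ring,
      digit_iterate_shiftFun (by omega) (hU.1 d)]
    rfl
  have hstep := digitStep_phiMap_shiftE hp NeZero.one_le hW
  rw [hdigits, ← suppMap_add_one hp hU.1, ← hj] at hstep
  exact hstep

theorem tupleOfDigits_digitsOf (hp : 2 ≤ p) (hU : ∀ d, U d ≤ p ^ r - 1) :
    tupleOfDigits p r (digitsOf p r U) = U := by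
  funext d
  have hlt : U d < p ^ r := by have := Nat.one_le_pow r p (by omega); have := hU d; omega
  conv_rhs => rw [← sum_div_pow_mod_mul_pow hp hlt]
  refine Finset.sum_congr rfl fun j hj => ?_
  rw [digitsOf, digit, ZMod.val_natCast, Nat.mod_eq_of_lt (Finset.mem_range.mp hj)]

theorem spU_eq_pathWeight_digitsOf (hp : 2 ≤ p) (hU : ∀ d, U d ≤ p ^ r - 1) :
    spU p D U = pathWeight D r (digitsOf p r U) := by
  conv_lhs => rw [← tupleOfDigits_digitsOf hp hU]
  exact spU_tupleOfDigits hp fun j _ d => Nat.mod_lt _ (by omega)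

end Support

/-- The support and digits of an element of `E_{D,p}(r)`, read as a walk of period `r`. -/
structure IsCycle (p : ℕ) (D : Finset (ι → ℕ)) (r : ℕ) (e : ℕ → ι → ℕ) (v : ℕ → D → ℕ) :
    Prop where
  isWalk : IsWalk p D e v
  periodic_e : Function.Periodic e r
  periodic_v : Function.Periodic v r
  pos : ∀ k, 0 < e 0 k

theorem Function.Periodic.apply_eq_of_natCast_eq {α : Type*} {f : ℕ → α} {r m n : ℕ}
    (h : Function.Periodic f r) (hmn : (m : ZMod r) = n) : f m = f n := by
  rw [← h.map_mod_nat m, ← h.map_mod_nat n, (ZMod.natCast_eq_natCast_iff' m n r).mp hmn]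

theorem Function.Periodic.sum_range_add {M : Type*} [AddCancelCommMonoid M] {f : ℕ → M} {r : ℕ}
    (h : Function.Periodic f r) (a : ℕ) :
    ∑ j ∈ Finset.range r, f (a + j) = ∑ j ∈ Finset.range r, f j := by
  induction a with
  | zero => simp
  | succ a ih =>
    have h1 := Finset.sum_range_succ (fun j => f (a + j)) r
    rw [Finset.sum_range_succ', add_zero, h a, ih] at h1
    simpa only [add_right_comm a 1, add_assoc] using add_right_cancel h1

section Cycles

variable {p r : ℕ} {D : Finset (ι → ℕ)} {U : D → ℕ} {e : ℕ → ι → ℕ} {v : ℕ → D → ℕ}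

theorem isCycle_suppMap [NeZero r] (hp : 2 ≤ p) (hU : memE p D r U) :
    IsCycle p D r (fun j => suppMap p D r U (-(j : ZMod r))) (digitsOf p r U) where
  isWalk := isWalk_suppMap hp hU
  periodic_e j := by
    change suppMap p D r U _ = suppMap p D r U _
    rw [Nat.cast_add, ZMod.natCast_self, add_zero]
  periodic_v j := by
    funext d
    simp only [digitsOf, Nat.cast_add, ZMod.natCast_self, add_zero]
  pos k := by simpa [suppMap_zero] using phiMap_pos hU k

theorem IsWalk.pos (h : IsWalk p D e v) (h0 : ∀ k, 0 < e 0 k) (j : ℕ) (k : ι) :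
    0 < e j k := by
  induction j with
  | zero => exact h0 k
  | succ j ih =>
    have := (h j).2 k
    exact Nat.pos_of_mul_pos_left (this ▸ Nat.add_pos_right _ ih)

theorem IsWalk.eq_of_apply_zero_eq (hp : 0 < p) {e' : ℕ → ι → ℕ} (h : IsWalk p D e v)
    (h' : IsWalk p D e' v) (h0 : e 0 = e' 0) : e = e' := by
  funext j
  induction j with
  | zero => exact h0
  | succ j ih =>
    funext k
    refine Nat.eq_of_mul_eq_mul_left hp ?_
    rw [← (h j).2 k, ← (h' j).2 k, ih]

theorem IsCycle.apply_period (h : IsCycle p D r e v) : e r = e 0 := by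
  simpa using h.periodic_e 0

theorem IsCycle.memE (hp : 2 ≤ p) (hr : 1 ≤ r) (h : IsCycle p D r e v) :
    memE p D r (tupleOfDigits p r v) :=
  h.isWalk.isPath.memE_tupleOfDigits hp hr h.apply_period h.pos

theorem IsCycle.spU (hp : 2 ≤ p) (h : IsCycle p D r e v) :
    spU p D (tupleOfDigits p r v) = pathWeight D r v :=
  spU_tupleOfDigits hp fun j _ => (h.isWalk j).1

theorem IsCycle.suppMap_tupleOfDigits_neg_natCast [NeZero r] (hp : 2 ≤ p) (h : IsCycle p D r e v)
    (j : ℕ) :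
    suppMap p D r (tupleOfDigits p r v) (-(j : ZMod r)) = e j := by
  have hU := h.memE hp NeZero.one_le
  have hdigits : digitsOf p r (tupleOfDigits p r v) = v := by
    funext j d
    rw [digitsOf, digit_tupleOfDigits hp (fun j _ => (h.isWalk j).1), ZMod.val_natCast,
      h.periodic_v.map_mod_nat]
  have hwalk := isWalk_suppMap hp hU
  rw [hdigits] at hwalk
  refine congrFun (hwalk.eq_of_apply_zero_eq (by omega) h.isWalk ?_) j
  simpa [suppMap_zero] using
    h.isWalk.isPath.phiMap_tupleOfDigits hp NeZero.one_le h.apply_period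

theorem IsCycle.suppMap_tupleOfDigits [NeZero r] (hp : 2 ≤ p) (h : IsCycle p D r e v)
    (κ : ZMod r) : suppMap p D r (tupleOfDigits p r v) κ = e (-κ).val := by
  rw [← h.suppMap_tupleOfDigits_neg_natCast hp, ZMod.natCast_zmod_val, neg_neg]

end Cycles

section Density

variable {p L : ℕ} {D : Finset (ι → ℕ)} {U : D → ℕ} {e : ℕ → ι → ℕ} {v : ℕ → D → ℕ}

theorem mul_density_le_spU (hp : 2 ≤ p) (hL : 1 ≤ L) (hU : memE p D L U) :
    ((p : ℝ) - 1) * L * density p D ≤ spU p D U := by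
  set X := {x : ℝ | ∃ r : ℕ, 1 ≤ r ∧ x = (sDp p D r : ℝ) / r}
  have hX : sInf X ≤ (sDp p D L : ℝ) / L :=
    csInf_le ⟨0, by rintro _ ⟨r, -, rfl⟩; positivity⟩ ⟨L, hL, rfl⟩
  have hs : sDp p D L ≤ spU p D U := Nat.sInf_le ⟨U, hU, rfl⟩
  have hp1 : (p : ℝ) - 1 ≠ 0 := by
    have : (2 : ℝ) ≤ p := by exact_mod_cast hp
    linarith
  have hL0 : (0 : ℝ) < L := by exact_mod_cast hL
  calc ((p : ℝ) - 1) * L * density p D = L * sInf X := by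
        rw [density]; field_simp; rfl
    _ ≤ L * ((sDp p D L : ℝ) / L) := by gcongr
    _ = sDp p D L := by field_simp
    _ ≤ spU p D U := by exact_mod_cast hs

theorem minimalSol_of_spU_le (hp : 2 ≤ p) (hL : 1 ≤ L) (hU : memE p D L U)
    (hle : (spU p D U : ℝ) ≤ ((p : ℝ) - 1) * L * density p D) : minimalSol p D L U :=
  ⟨hU, le_antisymm hle (mul_density_le_spU hp hL hU)⟩

theorem IsPath.mul_density_le_pathWeight (hp : 2 ≤ p) (h : IsPath p D L e v) (hcl : e L = e 0)
    (hpos : ∀ k, 0 < e 0 k) : ((p : ℝ) - 1) * L * density p D ≤ pathWeight D L v := by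
  rcases Nat.eq_zero_or_pos L with rfl | hL
  · simp [pathWeight]
  · rw [← spU_tupleOfDigits hp fun j hj => (h j hj).1]
    exact mul_density_le_spU hp hL (h.memE_tupleOfDigits hp hL hcl hpos)

theorem IsCycle.mul_density_le_pathWeight (hp : 2 ≤ p) (h : IsCycle p D L e v) :
    ((p : ℝ) - 1) * L * density p D ≤ pathWeight D L v :=
  h.isWalk.isPath.mul_density_le_pathWeight hp h.apply_period h.pos

end Density

section Arcs

variable {p r L a : ℕ} {D : Finset (ι → ℕ)} {e : ℕ → ι → ℕ} {v : ℕ → D → ℕ}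

theorem arc_apply (hwrap : e (a + L) = e a) {t : ℕ} (ht : t ≤ L) : e (a + t % L) = e (a + t) := by
  rcases ht.lt_or_eq with ht | rfl
  · rw [Nat.mod_eq_of_lt ht]
  · rw [Nat.mod_self, add_zero, hwrap]

theorem IsCycle.arc (h : IsCycle p D r e v) (hL : 0 < L) (hwrap : e (a + L) = e a) :
    IsCycle p D L (fun j => e (a + j % L)) (fun j => v (a + j % L)) where
  isWalk j := by
    change DigitStep p D (e (a + j % L)) (v (a + j % L)) (e (a + (j + 1) % L))
    rw [← Nat.mod_add_mod, arc_apply hwrap (Nat.mod_lt j hL)]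
    exact h.isWalk _
  periodic_e j := by simp only [Nat.add_mod_right]
  periodic_v j := by simp only [Nat.add_mod_right]
  pos k := by simpa using h.isWalk.pos h.pos a k

theorem pathWeight_arc :
    pathWeight D L (fun j => v (a + j % L)) = ∑ j ∈ Finset.range L, weightV D (v (a + j)) :=
  Finset.sum_congr rfl fun j hj => by
    simp only [Nat.mod_eq_of_lt (Finset.mem_range.mp hj)]

theorem IsCycle.pathWeight_rotate (h : IsCycle p D r e v) :
    pathWeight D r (fun j => v (a + j % r)) = pathWeight D r v := by
  rw [pathWeight_arc]
  exact Function.Periodic.sum_range_add (f := fun j => weightV D (v j))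
    (fun j => by simp only [h.periodic_v j]) a

end Arcs

section Forward

variable {p r : ℕ} {D : Finset (ι → ℕ)} {e : ℕ → ι → ℕ} {v : ℕ → D → ℕ}

theorem IsCycle.vset_nonempty_of_injective [NeZero r] (hp : 2 ≤ p) (h : IsCycle p D r e v)
    (hmin : (pathWeight D r v : ℝ) ≤ ((p : ℝ) - 1) * r * density p D)
    (hinj : ∀ a b, e a = e b → (a : ZMod r) = b) (i : ℕ) :
    (Vset p D (e (i + 1)) (e i)).Nonempty := by
  have hr : 1 ≤ r := NeZero.one_le
  have hrot := h.arc (a := i) (Nat.pos_of_neZero r) (h.periodic_e i)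
  set W := tupleOfDigits p r fun j => v (i + j % r)
  have hsupp (κ : ZMod r) : suppMap p D r W κ = e (i + (-κ).val) := by
    rw [hrot.suppMap_tupleOfDigits hp, Nat.mod_eq_of_lt (ZMod.val_lt _)]
  have hWmin : minimalSol p D r W := by
    refine minimalSol_of_spU_le hp hr (hrot.memE hp hr) ?_
    rwa [hrot.spU hp, h.pathWeight_rotate]
  have hWinj : Function.Injective (suppMap p D r W) := fun κ κ' hκ => by
    rw [hsupp, hsupp] at hκ
    simpa using hinj _ _ hκ
  refine ⟨psiMap p D W, r, hr, W, ⟨hWmin, hWinj⟩, ?_, ?_, rfl⟩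
  · rw [hsupp, neg_neg]
    exact h.periodic_e.apply_eq_of_natCast_eq (by simp)
  · rw [hsupp, neg_zero, ZMod.val_zero, add_zero]

theorem IsCycle.arc_edge (h : IsCycle p D r e v) {a L t i : ℕ} (hwrap : e (a + L) = e a)
    (ht : t < L) (hti : ((a + t : ℕ) : ZMod r) = i) :
    e (a + (t + 1) % L) = e (i + 1) ∧ e (a + t % L) = e i := by
  rw [arc_apply hwrap (t := t + 1) ht, arc_apply hwrap ht.le, ← add_assoc]
  exact ⟨h.periodic_e.apply_eq_of_natCast_eq (by push_cast at hti ⊢; rw [hti]),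
    h.periodic_e.apply_eq_of_natCast_eq hti⟩

theorem IsCycle.exists_shorter (hp : 2 ≤ p) (h : IsCycle p D r e v)
    (hmin : (pathWeight D r v : ℝ) ≤ ((p : ℝ) - 1) * r * density p D)
    {a b : ℕ} (hab : a < b) (hbr : b < r) (heq : e a = e b) (i : ℕ) :
    ∃ r' < r, 1 ≤ r' ∧ ∃ (e' : ℕ → ι → ℕ) (v' : ℕ → D → ℕ), IsCycle p D r' e' v' ∧
      (pathWeight D r' v' : ℝ) ≤ ((p : ℝ) - 1) * r' * density p D ∧
      ∃ i', e' (i' + 1) = e (i + 1) ∧ e' i' = e i := by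
  obtain ⟨L₁, rfl⟩ : ∃ L₁, b = a + L₁ := ⟨b - a, by omega⟩
  obtain ⟨L₂, rfl⟩ : ∃ L₂, r = L₁ + L₂ := ⟨r - L₁, by omega⟩
  have hwrap₁ : e (a + L₁) = e a := heq.symm
  have hwrap₂ : e (a + L₁ + L₂) = e (a + L₁) := by
    rw [add_assoc, h.periodic_e a, heq]
  have h₁ := h.arc (by omega) hwrap₁
  have h₂ := h.arc (by omega) hwrap₂
  have hsplit : (pathWeight D L₁ (fun j => v (a + j % L₁)) : ℝ)
      + pathWeight D L₂ (fun j => v (a + L₁ + j % L₂)) = pathWeight D (L₁ + L₂) v := by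
    rw [pathWeight_arc, pathWeight_arc, ← h.pathWeight_rotate (a := a), pathWeight_arc,
      Finset.sum_range_add]
    simp only [add_assoc, Nat.cast_add]
  have hlb₁ := h₁.mul_density_le_pathWeight hp
  have hlb₂ := h₂.mul_density_le_pathWeight hp
  push_cast at hmin hlb₁ hlb₂
  have : NeZero (L₁ + L₂) := ⟨by omega⟩
  obtain ⟨t, ht⟩ : ∃ t, ((a + t : ℕ) : ZMod (L₁ + L₂)) = i ∧ t < L₁ + L₂ :=
    ⟨((i : ZMod (L₁ + L₂)) - a).val, by push_cast; simp, ZMod.val_lt _⟩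
  rcases Nat.lt_or_ge t L₁ with ht₁ | ht₁
  · refine ⟨L₁, by omega, by omega, _, _, h₁, by linarith, t, h.arc_edge hwrap₁ ht₁ ht.1⟩
  · refine ⟨L₂, by omega, by omega, _, _, h₂, by linarith, t - L₁,
      h.arc_edge hwrap₂ (by omega) ?_⟩
    rw [← ht.1, show a + L₁ + (t - L₁) = a + t by omega]

theorem IsCycle.vset_nonempty (hp : 2 ≤ p) (hr : 1 ≤ r) (h : IsCycle p D r e v)
    (hmin : (pathWeight D r v : ℝ) ≤ ((p : ℝ) - 1) * r * density p D) (i : ℕ) :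
    (Vset p D (e (i + 1)) (e i)).Nonempty := by
  induction r using Nat.strong_induction_on generalizing e v i with
  | _ r ih =>
  have : NeZero r := ⟨by omega⟩
  by_cases hinj : ∀ a b, e a = e b → (a : ZMod r) = b
  · exact h.vset_nonempty_of_injective hp hmin hinj i
  push Not at hinj
  obtain ⟨a, b, heq, hne⟩ := hinj
  rw [← h.periodic_e.map_mod_nat a, ← h.periodic_e.map_mod_nat b] at heq
  rw [Ne, ZMod.natCast_eq_natCast_iff'] at hne
  obtain ⟨a', b', hab, hbr, heq'⟩ : ∃ a' b', a' < b' ∧ b' < r ∧ e a' = e b' := by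
    rcases Nat.lt_or_gt_of_ne hne with hlt | hlt
    · exact ⟨_, _, hlt, Nat.mod_lt _ (by omega), heq⟩
    · exact ⟨_, _, hlt, Nat.mod_lt _ (by omega), heq.symm⟩
  obtain ⟨r', hr', hr'1, e', v', h', hmin', i', h1, h0⟩ := h.exists_shorter hp hmin hab hbr heq' i
  rw [← h1, ← h0]
  exact ih r' hr' hr'1 h' hmin' i'

end Forward

def HasPath (p : ℕ) (D : Finset (ι → ℕ)) (L : ℕ) (x y : ι → ℕ) (c : ℕ) : Prop :=
  ∃ (e : ℕ → ι → ℕ) (v : ℕ → D → ℕ), IsPath p D L e v ∧ e 0 = x ∧ e L = y ∧ pathWeight D L v = c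

section Construction

variable {p r L M : ℕ} {D : Finset (ι → ℕ)} {x y z : ι → ℕ} {c c' : ℕ}

theorem HasPath.refl (x : ι → ℕ) : HasPath p D 0 x x 0 :=
  ⟨fun _ => x, fun _ _ => 0, fun _ hj => absurd hj (Nat.not_lt_zero _), rfl, rfl, rfl⟩

theorem HasPath.append (h₁ : HasPath p D L x y c) (h₂ : HasPath p D M y z c') :
    HasPath p D (L + M) x z (c + c') := by
  obtain ⟨e, v, h, rfl, hy, rfl⟩ := h₁
  obtain ⟨e', v', h', rfl, rfl, rfl⟩ := h₂
  refine ⟨fun j => if j < L then e j else e' (j - L), fun j => if j < L then v j else v' (j - L),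
    fun j hj => ?_, ?_, by simp, ?_⟩
  · by_cases hj₁ : j + 1 < L
    · simpa only [if_pos hj₁, if_pos (show j < L by omega)] using h j (by omega)
    by_cases hj₀ : j < L
    · have hjL : j + 1 = L := by omega
      simpa only [if_pos hj₀, hjL, lt_irrefl, if_false, Nat.sub_self, ← hy] using h j hj₀
    · simp only [if_neg hj₀, if_neg hj₁, show j + 1 - L = j - L + 1 by omega]
      exact h' (j - L) (by omega)
  · rcases Nat.eq_zero_or_pos L with rfl | hL
    · simp [hy]
    · simp [hL]
  · rw [pathWeight, Finset.sum_range_add]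
    congr 1
    · exact Finset.sum_congr rfl fun j hj => by simp [Finset.mem_range.mp hj]
    · exact Finset.sum_congr rfl fun j _ => by simp

theorem hasPath_sum (x : ℕ → ι → ℕ) (len c : ℕ → ℕ) {N : ℕ}
    (h : ∀ i < N, HasPath p D (len i) (x (i + 1)) (x i) (c i)) :
    HasPath p D (∑ i ∈ Finset.range N, len i) (x N) (x 0) (∑ i ∈ Finset.range N, c i) := by
  induction N with
  | zero => exact HasPath.refl _
  | succ N ih =>
    rw [Finset.sum_range_succ, Finset.sum_range_succ, add_comm, add_comm (∑ i ∈ _, c i)]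
    exact (h N (by omega)).append (ih fun i hi => h i (by omega))

theorem HasPath.mul_density_le (hp : 2 ≤ p) (h : HasPath p D L x x c) (hpos : ∀ k, 0 < x k) :
    ((p : ℝ) - 1) * L * density p D ≤ c := by
  obtain ⟨e, v, h, rfl, he, rfl⟩ := h
  exact h.mul_density_le_pathWeight hp he hpos

theorem exists_hasPath_of_memE (hp : 2 ≤ p) (hr : 1 ≤ r) {W : D → ℕ} (hW : memE p D r W) :
    DigitStep p D (suppMap p D r W 0) (psiMap p D W) (suppMap p D r W (-1)) ∧
    ∃ c, spU p D W = weightV D (psiMap p D W) + c ∧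
      HasPath p D (r - 1) (suppMap p D r W (-1)) (suppMap p D r W 0) c := by
  obtain ⟨n, rfl⟩ : ∃ n, r = n + 1 := ⟨r - 1, by omega⟩
  rw [Nat.add_sub_cancel]
  have hc := isCycle_suppMap hp hW
  have hψ : digitsOf p (n + 1) W 0 = psiMap p D W := by
    funext d; simp [digitsOf, digit, psiMap]
  have hstep := hc.isWalk 0
  simp only [Nat.cast_zero, neg_zero, zero_add, Nat.cast_one] at hstep
  rw [hψ] at hstep
  refine ⟨hstep, pathWeight D n (fun j => digitsOf p (n + 1) W (j + 1)), ?_,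
    fun j => suppMap p D (n + 1) W (-((j + 1 : ℕ) : ZMod (n + 1))),
    fun j => digitsOf p (n + 1) W (j + 1), fun j _ => hc.isWalk (j + 1), by simp, ?_, rfl⟩
  · rw [spU_eq_pathWeight_digitsOf hp hW.1, pathWeight, Finset.sum_range_succ', hψ, add_comm]
    rfl
  · change suppMap p D (n + 1) W (-((n + 1 : ℕ) : ZMod (n + 1))) = _
    rw [ZMod.natCast_self, neg_zero]

theorem isCycle_of_digitStep [NeZero r] {φ : ZMod r → ι → ℕ} {w : ℕ → D → ℕ}
    (hstep : ∀ i < r, DigitStep p D (φ (-(i : ZMod r))) (w i) (φ (-(i : ZMod r) - 1)))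
    (hpos : ∀ k, 0 < φ 0 k) :
    IsCycle p D r (fun j => φ (-(j : ZMod r))) (fun j => w (j % r)) where
  isWalk j := by
    have h := hstep (j % r) (Nat.mod_lt _ (Nat.pos_of_neZero r))
    rw [ZMod.natCast_mod] at h
    convert h using 3
    push_cast
    ring
  periodic_e j := by simp only [Nat.cast_add, ZMod.natCast_self, add_zero]
  periodic_v j := by simp only [Nat.add_mod_right]
  pos k := by simpa using hpos k

/-- Paths from `φ(-i-1)` to `φ(-i)` for all `i < r` chain into a closed path through `φ 0`. -/
theorem mul_density_le_sum_of_hasPath [NeZero r] (hp : 2 ≤ p) {φ : ZMod r → ι → ℕ}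
    (hpos : ∀ k, 0 < φ 0 k) {len c : ℕ → ℕ}
    (h : ∀ i < r, HasPath p D (len i) (φ (-(i : ZMod r) - 1)) (φ (-(i : ZMod r))) (c i)) :
    ((p : ℝ) - 1) * (∑ i ∈ Finset.range r, len i : ℕ) * density p D
      ≤ (∑ i ∈ Finset.range r, c i : ℕ) := by
  have hchain := hasPath_sum (fun i => φ (-(i : ZMod r))) len c fun i hi => by
    simpa only [Nat.cast_succ, neg_add, ← sub_eq_add_neg] using h i hi
  simp only [ZMod.natCast_self, Nat.cast_zero, neg_zero] at hchain
  exact hchain.mul_density_le hp hpos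

theorem sum_le_of_add_eq_mul {A B : ℝ} {R a c : ℕ → ℕ} (hR : ∀ i < r, 1 ≤ R i)
    (hsplit : ∀ i < r, ((a i + c i : ℕ) : ℝ) = A * R i * B)
    (hc : A * (∑ i ∈ Finset.range r, (R i - 1) : ℕ) * B ≤ (∑ i ∈ Finset.range r, c i : ℕ)) :
    (∑ i ∈ Finset.range r, a i : ℕ) ≤ A * r * B := by
  have htotal : ∑ i ∈ Finset.range r, ((a i + c i : ℕ) : ℝ)
      = A * (∑ i ∈ Finset.range r, (R i - 1) : ℕ) * B + A * r * B := by
    rw [Finset.sum_congr rfl fun i hi => hsplit i (Finset.mem_range.mp hi), ← Finset.sum_mul,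
      ← Finset.mul_sum, Nat.cast_sum,
      Finset.sum_congr rfl fun i hi => Nat.cast_sub (hR i (Finset.mem_range.mp hi))]
    simp only [Finset.sum_sub_distrib, Finset.sum_const, Finset.card_range, nsmul_eq_mul]
    push_cast
    ring
  push_cast at htotal hc ⊢
  rw [Finset.sum_add_distrib] at htotal
  linarith

theorem exists_minimalSol_of_vset_nonempty (hp : 2 ≤ p) (hr : 1 ≤ r) (φ : ZMod r → ι → ℕ)
    (hV : ∀ i < r, (Vset p D (φ (-(i : ZMod r) - 1)) (φ (-(i : ZMod r)))).Nonempty) :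
    ∃ U, minimalSol p D r U ∧ suppMap p D r U = φ := by
  have : NeZero r := ⟨by omega⟩
  have hsel : ∀ i < r, ∃ R W, 1 ≤ R ∧ memMI p D R W ∧
      suppMap p D R W (-1) = φ (-(i : ZMod r) - 1) ∧ suppMap p D R W 0 = φ (-(i : ZMod r)) :=
    fun i hi => by
      obtain ⟨-, R, hR, W, hW, h₁, h₀, -⟩ := hV i hi
      exact ⟨R, W, hR, hW, h₁, h₀⟩
  choose! R W hR hW h₁ h₀ using hsel
  have htail := fun i hi => exists_hasPath_of_memE hp (hR i hi) (hW i hi).1.1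
  choose! c hc hpath using fun i hi => (htail i hi).2
  have hpos : ∀ k, 0 < φ 0 k := fun k => by
    have h := h₀ 0 (by omega)
    rw [Nat.cast_zero, neg_zero, suppMap_zero] at h
    exact h ▸ phiMap_pos (hW 0 (by omega)).1.1 k
  have hcyc := isCycle_of_digitStep (w := fun i => psiMap p D (W i))
    (fun i hi => h₀ i hi ▸ h₁ i hi ▸ (htail i hi).1) hpos
  refine ⟨tupleOfDigits p r _, minimalSol_of_spU_le hp hr (hcyc.memE hp hr) ?_, ?_⟩
  · have hwt : pathWeight D r (fun j => psiMap p D (W (j % r)))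
        = ∑ i ∈ Finset.range r, weightV D (psiMap p D (W i)) :=
      Finset.sum_congr rfl fun i hi => by simp only [Nat.mod_eq_of_lt (Finset.mem_range.mp hi)]
    rw [hcyc.spU hp, hwt]
    refine sum_le_of_add_eq_mul hR (fun i hi => ?_)
      (mul_density_le_sum_of_hasPath hp hpos fun i hi => h₀ i hi ▸ h₁ i hi ▸ hpath i hi)
    rw [← hc i hi]
    exact (hW i hi).1.2
  · funext κ
    simp [hcyc.suppMap_tupleOfDigits hp]

end Construction

theorem Mphi_empty_iff_general (p : ℕ) (hp : p.Prime) {ι : Type}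
    (D : Finset (ι → ℕ))
    (r : ℕ) (hr : 1 ≤ r) (φ : ZMod r → (ι → ℕ)) :
    (¬ ∃ U : D → ℕ, minimalSol p D r U ∧ suppMap p D r U = φ) ↔
    (∃ i : ℕ, i < r ∧ Vset p D (φ (-(i : ZMod r) - 1)) (φ (-(i : ZMod r))) = ∅) := by
  have hp2 := hp.two_le
  have : NeZero r := ⟨by omega⟩
  simp only [← Set.not_nonempty_iff_eq_empty]
  constructor
  · intro hnone
    by_contra! hall
    exact hnone (exists_minimalSol_of_vset_nonempty hp2 hr φ hall)
  · rintro ⟨i, -, hi⟩ ⟨U, hU, rfl⟩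
    have hmin : (pathWeight D r (digitsOf p r U) : ℝ) ≤ ((p : ℝ) - 1) * r * density p D := by
      rw [← spU_eq_pathWeight_digitsOf hp2 hU.1.1, hU.2]
    apply hi
    simpa only [Nat.cast_succ, neg_add, ← sub_eq_add_neg] using
      (isCycle_suppMap hp2 hU.1).vset_nonempty hp2 hr hmin i

/-- The set `M_{D,p}(φ)` of minimal solutions with support `φ` is empty if and
only if one of the sets `V(φ(−i−1), φ(−i))` is empty. -/
theorem Mphi_empty_iff (p : ℕ) (hp : p.Prime) {ι : Type} [Fintype ι] [Nonempty ι]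
    (D : Finset (ι → ℕ)) (hD : D.Nonempty)
    (hcoord : ∀ k : ι, ∃ d ∈ D, 0 < d k)
    (r : ℕ) (hr : 1 ≤ r) (φ : ZMod r → (ι → ℕ))
    (hφ : ∀ i, φ i ∈ minSupport p D) :
    (¬ ∃ U : D → ℕ, minimalSol p D r U ∧ suppMap p D r U = φ) ↔
    (∃ i : ℕ, i < r ∧ Vset p D (φ (-(i : ZMod r) - 1)) (φ (-(i : ZMod r))) = ∅) :=
  Mphi_empty_iff_general p hp D r hr φ
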